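/- arXiv:0801.3792 — 2 statements merged into one kernel-verified Lean document; each statement's English description precedes it below -/
import Mathlib

section
/- Let G be an abelian group and S a finite sequence over G. If k ∈ [2, |S|−2], |Σ_k(S)| ≤ 2, and Σ_k(S) is not a coset of a subgroup of order 2, then either S = g^{|S|} or S = g^{|S|−1} h for some g, h ∈ G. -/
/-!
Fix a sub-multiset `T` of `S` avoiding a few prescribed terms and vary only those terms.
If `S` has three distinct values `a, b, c`, then `T + a`, `T + b`, `T + c` (with `|T| = k - 1`)
are three distinct `k`-sums. If `S` takes exactly two values `a ≠ b`, each at least twice, then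
`T + 2a`, `T + (a + b)`, `T + 2b` (with `|T| = k - 2`) are `k`-sums; the first two and the last
two differ, so `|Σ_k(S)| ≤ 2` forces `2 (b - a) = 0`. Then every `k`-sum lies in
`k a + ⟨b - a⟩`, a coset of a subgroup of order `2`, and `Σ_k(S)` has two elements, so it is
that coset.
-/

/-- The set of sums of `k`-term subsequences of `S`. -/
def subsums {G : Type*} [AddCommGroup G] (S : Multiset G) (k : ℕ) : Set G :=
  {x | ∃ T ≤ S, Multiset.card T = k ∧ T.sum = x}

open Multiset

theorem Multiset.exists_le_card_eq {α : Type*} {s : Multiset α} {n : ℕ} (h : n ≤ card s) :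
    ∃ t ≤ s, card t = n := by
  have : 0 < card (powersetCard n s) := by
    rw [card_powersetCard]; exact Nat.choose_pos h
  obtain ⟨t, ht⟩ := card_pos_iff_exists_mem.1 this
  exact ⟨t, mem_powersetCard.1 ht⟩

theorem Multiset.exists_add_le_card_eq {α : Type*} {s u : Multiset α} (hu : u ≤ s) {n : ℕ}
    (hn : n + card u ≤ card s) : ∃ t, t + u ≤ s ∧ card t = n := by
  classical
  obtain ⟨t, ht, rfl⟩ := exists_le_card_eq (n := n) (s := s - u) (by rw [card_sub hu]; omega)
  exact ⟨t, Multiset.sub_add_cancel hu ▸ add_le_add_left ht u, rfl⟩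

theorem Multiset.eq_replicate_add_singleton {α : Type*} [DecidableEq α] {s : Multiset α}
    {a b : α} (hs : ∀ x ∈ s, x = a ∨ x = b) (hb : count b s = 1) :
    s = replicate (card s - 1) a + {b} := by
  have hbs : b ∈ s := count_pos.1 (by omega)
  have hrest : s.erase b = replicate (card s - 1) a := by
    rw [← Nat.pred_eq_sub_one, ← card_erase_of_mem hbs, eq_replicate_card]
    intro x hx
    refine (hs x (mem_of_mem_erase hx)).resolve_right ?_
    rintro rfl
    have := count_pos.2 hx
    rw [count_erase_self] at this
    omega
  rw [← hrest, add_comm, singleton_add, cons_erase hbs]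

section

variable {G : Type*} [AddCommGroup G]

theorem subsums_finite (S : Multiset G) (k : ℕ) : (subsums S k).Finite := by
  classical
  refine ((S.powersetCard k).map Multiset.sum).toFinset.finite_toSet.subset ?_
  rintro _ ⟨T, hT, hk, rfl⟩
  exact Multiset.mem_toFinset.2 (mem_map_of_mem _ (mem_powersetCard.2 ⟨hT, hk⟩))

theorem sum_add_sum_mem_subsums {S T U V : Multiset G} {k : ℕ} (hTU : T + U ≤ S) (hVU : V ≤ U)
    (hk : card T + card V = k) : T.sum + V.sum ∈ subsums S k :=
  ⟨T + V, (add_le_add_right hVU T).trans hTU, by simp [hk], sum_add T V⟩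

theorem two_lt_ncard_subsums_of_distinct {S : Multiset G} {k : ℕ} {a b c : G} (ha : a ∈ S)
    (hb : b ∈ S) (hc : c ∈ S) (hab : a ≠ b) (hac : a ≠ c) (hbc : b ≠ c) (hk : 1 ≤ k)
    (hkS : k + 2 ≤ card S) : 2 < (subsums S k).ncard := by
  have hU : {a, b, c} ≤ S := by
    rw [le_iff_subset (by simp [hab, hac, hbc])]
    simp [Multiset.subset_iff, ha, hb, hc]
  obtain ⟨T, hTU, hT⟩ := exists_add_le_card_eq hU (n := k - 1) (by simp; omega)
  have mem (x : G) (hx : x ∈ ({a, b, c} : Multiset G)) : T.sum + x ∈ subsums S k := by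
    simpa using sum_add_sum_mem_subsums hTU (singleton_le.2 hx) (by simp; omega)
  rw [Set.two_lt_ncard_iff (subsums_finite S k)]
  exact ⟨_, _, _, mem a (by simp), mem b (by simp), mem c (by simp), by simpa, by simpa,
    by simpa⟩

theorem subsums_subset_image_add {S : Multiset G} {H : AddSubgroup G} {a : G}
    (hS : ∀ x ∈ S, x - a ∈ H) (k : ℕ) :
    subsums S k ⊆ (fun h => k • a + h) '' (H : Set G) := by
  rintro _ ⟨T, hT, rfl, rfl⟩
  refine ⟨(T.map (· - a)).sum, H.multiset_sum_mem _ ?_, ?_⟩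
  · simpa using fun x hx => hS x (mem_of_le hT hx)
  · simp [sum_map_sub]

theorem exists_coset_eq_subsums_of_two_values [DecidableEq G] {S : Multiset G} {k : ℕ} {a b : G}
    (hab : a ≠ b) (hS : ∀ x ∈ S, x = a ∨ x = b) (ha : 2 ≤ count a S) (hb : 2 ≤ count b S)
    (hk : 2 ≤ k) (hkS : k + 2 ≤ card S) (hsub : (subsums S k).ncard ≤ 2) :
    ∃ (H : AddSubgroup G) (x : G), Nat.card H = 2 ∧
      subsums S k = (fun h => x + h) '' (H : Set G) := by
  have hU : replicate 2 a + replicate 2 b ≤ S := by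
    rw [add_eq_union_iff_disjoint.2 (by simp [hab.symm])]
    exact union_le (le_count_iff_replicate_le.1 ha) (le_count_iff_replicate_le.1 hb)
  obtain ⟨T, hTU, hT⟩ := exists_add_le_card_eq hU (n := k - 2) (by simp; omega)
  have mem (i j : ℕ) (hij : i + j = 2) :
      T.sum + (i • a + j • b) ∈ subsums S k := by
    simpa [sum_replicate] using sum_add_sum_mem_subsums hTU
      (add_le_add ((replicate_le_replicate a).2 (by omega))
        ((replicate_le_replicate b).2 (by omega)))
      (by simp; omega)
  have mem_aa : T.sum + 2 • a ∈ subsums S k := by simpa using mem 2 0 rfl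
  have mem_ab : T.sum + (a + b) ∈ subsums S k := by simpa using mem 1 1 rfl
  have mem_bb : T.sum + 2 • b ∈ subsums S k := by simpa using mem 0 2 rfl
  have hne : T.sum + 2 • a ≠ T.sum + (a + b) := by simpa [two_nsmul] using hab
  have hd : 2 • (b - a) = 0 := by
    by_contra hd
    refine hsub.not_gt ((Set.two_lt_ncard_iff (subsums_finite S k)).2
      ⟨_, _, _, mem_aa, mem_ab, mem_bb, hne, ?_, ?_⟩)
    · intro h
      exact hd (by rw [nsmul_sub, add_left_cancel h, sub_self])
    · simpa [two_nsmul, add_comm] using hab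
  have hH : Nat.card (AddSubgroup.zmultiples (b - a)) = 2 := by
    rw [Nat.card_zmultiples]
    exact addOrderOf_eq_prime hd (sub_ne_zero.2 hab.symm)
  refine ⟨_, k • a, hH, Set.eq_of_subset_of_ncard_le (subsums_subset_image_add ?_ k) ?_ ?_⟩
  · intro x hx
    rcases hS x hx with rfl | rfl
    · simp
    · exact AddSubgroup.mem_zmultiples _
  · rw [Set.ncard_image_of_injective _ (add_right_injective _), ← Nat.card_coe_set_eq,
      SetLike.coe_sort_coe, hH, ← Set.ncard_pair hne]
    exact Set.ncard_le_ncard (Set.pair_subset mem_aa mem_ab) (subsums_finite S k)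
  · exact (Set.finite_coe_iff.1 (Nat.finite_of_card_ne_zero (by simp [hH]))).image _

end

theorem stmt_4 {G : Type*} [AddCommGroup G]
    (S : Multiset G) (k : ℕ) (hk1 : 2 ≤ k) (hk2 : k ≤ Multiset.card S - 2)
    (hsub : (subsums S k).ncard ≤ 2)
    (hcoset : ¬ ∃ (H : AddSubgroup G) (x : G), Nat.card H = 2 ∧
      subsums S k = (fun h => x + h) '' (H : Set G)) :
    ∃ g h : G, S = Multiset.replicate (Multiset.card S) g ∨
      S = Multiset.replicate (Multiset.card S - 1) g + {h} := by
  classical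
  have hkS : k + 2 ≤ card S := by omega
  obtain ⟨a, ha⟩ : ∃ a, a ∈ S := card_pos_iff_exists_mem.1 (by omega)
  by_cases hconst : ∀ x ∈ S, x = a
  · exact ⟨a, a, Or.inl (eq_replicate_card.2 hconst)⟩
  obtain ⟨b, hb, hba⟩ : ∃ b ∈ S, b ≠ a := by simpa using hconst
  have hS : ∀ x ∈ S, x = a ∨ x = b := by
    by_contra! ⟨c, hc, hca, hcb⟩
    exact hsub.not_gt
      (two_lt_ncard_subsums_of_distinct ha hb hc hba.symm hca.symm hcb.symm (by omega) hkS)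
  by_cases hb1 : count b S = 1
  · exact ⟨a, b, Or.inr (eq_replicate_add_singleton hS hb1)⟩
  by_cases ha1 : count a S = 1
  · exact ⟨b, a, Or.inr (eq_replicate_add_singleton (fun x hx => (hS x hx).symm) ha1)⟩
  have ha2 : 2 ≤ count a S := by have := count_pos.2 ha; omega
  have hb2 : 2 ≤ count b S := by have := count_pos.2 hb; omega
  exact (hcoset (exists_coset_eq_subsums_of_two_values hba.symm hS ha2 hb2 hk1 hkS hsub)).elim
end

section
/- Let G be a cyclic group of order n ≥ 2 and S a sequence over G of length |S| = 2n−2 with 0 ∉ Σ_n(S). Then S = g^{n−1} h^{n−1} for some g, h ∈ G with ord(g − h) = n. -/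
/-!
Strong induction on `n`.

For `n = p` prime, no value occurs `p` times in `S`, so `S` splits into `p - 1` pairs of distinct
elements. Completing one pair to a zero sum of length `p` is impossible, so by Cauchy–Davenport the
sums obtained by choosing one entry from each of the other `p - 2` pairs miss exactly one element.
Comparing two pairs with a third shows that all pairs are translates of a single pair `{0, d}`;
then the missing element pins down the translate, and all pairs coincide.

For `n = p * q`, take a subgroup `K` of order `q`. Call a `p`-element submultiset whose sum lies in
`K` a block. The sums of `2q - 1` disjoint blocks would contain a zero sum of length `q` by the
Erdős–Ginzburg–Ziv theorem in `K`, so `S` has no such blocks; by the inverse theorem for `G ⧸ K`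
and induction on the number of blocks, `S` meets only two cosets of `K`. Exchanging one element of
a block for another element of the same coset changes exactly one entry of a sequence of block sums
that is extremal in `K`; by the inverse theorem for `K` this is impossible unless the two elements
are equal. Hence each coset containing more than `p` terms of `S` contributes a single value, and
counting gives `S = g^(n-1) h^(n-1)`.
-/

open Multiset Pointwise

universe u

namespace Multiset

variable {α β : Type*}

theorem exists_le_card_eq_s7 {S : Multiset α} {k : ℕ} (h : k ≤ card S) : ∃ T ≤ S, card T = k := by
  obtain ⟨T, hT⟩ := card_pos_iff_exists_mem.1
    (by rw [card_powersetCard]; exact Nat.choose_pos h)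
  exact ⟨T, mem_powersetCard.1 hT⟩

theorem exists_le_map_eq {f : α → β} {S : Multiset α} {T : Multiset β} (h : T ≤ S.map f) :
    ∃ U ≤ S, U.map f = T := by
  classical
  induction T using Multiset.induction generalizing S with
  | empty => exact ⟨0, zero_le _, map_zero f⟩
  | cons b T ih =>
    obtain ⟨a, ha, rfl⟩ := mem_map.1 (mem_of_le h (mem_cons_self _ _))
    have hT : T ≤ (S.erase a).map f := by
      rw [map_erase_of_mem f S ha, ← erase_cons_head (f a) T]
      exact erase_le_erase _ h
    obtain ⟨U, hU, rfl⟩ := ih hT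
    exact ⟨a ::ₘ U, (cons_le_cons a hU).trans (cons_erase ha).le, map_cons f a U⟩

theorem map_tsub_of_le [DecidableEq α] [DecidableEq β] (f : α → β) {U S : Multiset α}
    (h : U ≤ S) : (S - U).map f = S.map f - U.map f := by
  rw [eq_tsub_iff_add_eq_of_le (map_le_map h), ← map_add, tsub_add_cancel_of_le h]

theorem sum_le_sum_of_le {C D : Multiset (Multiset α)} (h : D ≤ C) : D.sum ≤ C.sum := by
  obtain ⟨E, rfl⟩ := le_iff_exists_add.1 h
  rw [sum_add]
  exact le_add_right _ _

theorem exists_map_map_eq_of_sum_le {f : α → β} {C : Multiset (Multiset β)} {S : Multiset α}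
    (h : C.sum ≤ S.map f) : ∃ C' : Multiset (Multiset α), C'.map (map f) = C ∧ C'.sum ≤ S := by
  classical
  induction C using Multiset.induction generalizing S with
  | empty => exact ⟨0, map_zero _, by simp⟩
  | cons B C ih =>
    rw [sum_cons] at h
    obtain ⟨B', hB', rfl⟩ := exists_le_map_eq ((le_add_right B C.sum).trans h)
    obtain ⟨C', rfl, hC'⟩ := ih (S := S - B') (by
      rw [map_tsub_of_le f hB']; exact le_tsub_of_add_le_left h)
    refine ⟨B' ::ₘ C', map_cons _ _ _, ?_⟩
    rw [sum_cons, ← add_tsub_cancel_of_le hB']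
    exact add_le_add le_rfl hC'

theorem card_sum_of_forall_card_eq {p : ℕ} {C : Multiset (Multiset α)}
    (h : ∀ B ∈ C, card B = p) : card C.sum = card C * p := by
  induction C using Multiset.induction with
  | empty => simp
  | cons B C ih =>
    rw [sum_cons, card_add, h B (mem_cons_self B C), ih fun B' hB' => h B' (mem_cons_of_mem hB'),
      card_cons]
    ring

theorem count_add_count_add_count_le_card [DecidableEq α] {a b c : α} (hab : a ≠ b) (hac : a ≠ c)
    (hbc : b ≠ c) (S : Multiset α) : count a S + count b S + count c S ≤ card S :=
  calc count a S + count b S + count c S = ∑ x ∈ {a, b, c}, count x S := by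
        simp [Finset.sum_insert, hab, hac, hbc, add_assoc]
    _ ≤ ∑ x ∈ S.toFinset ∪ {a, b, c}, count x S :=
        Finset.sum_le_sum_of_subset Finset.subset_union_right
    _ = card S := sum_count_eq_card fun x hx => by simp [hx]

/-- Remove a value of maximal multiplicity and a value of maximal multiplicity among the others;
a third value of multiplicity `m + 1` would leave no room for these two. -/
theorem exists_erase_erase_count_le [DecidableEq α] {m : ℕ} {S : Multiset α}
    (hS : card S = 2 * (m + 1)) (hcount : ∀ a, count a S ≤ m + 1) :
    ∃ a b, a ≠ b ∧ a ::ₘ b ::ₘ (S.erase a).erase b = S ∧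
      ∀ c, count c ((S.erase a).erase b) ≤ m := by
  have hS0 : S.toFinset.Nonempty := by
    rw [toFinset_nonempty, ← card_pos]; omega
  obtain ⟨a, haS, hamax⟩ := S.toFinset.exists_max_image (count · S) hS0
  have hb : (S.filter (· ≠ a)).toFinset.Nonempty := by
    by_contra h
    have : count a S = card S := count_eq_card.2 fun x hx => by
      by_contra hxa
      exact h ⟨x, by simpa [mem_filter] using ⟨hx, Ne.symm hxa⟩⟩
    linarith [hcount a]
  obtain ⟨b, hb, hbmax⟩ := (S.filter (· ≠ a)).toFinset.exists_max_image (count · S) hb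
  obtain ⟨hbS, hba⟩ : b ∈ S ∧ b ≠ a := by simpa using hb
  set S' := (S.erase a).erase b
  have hS' : a ::ₘ b ::ₘ S' = S := by
    rw [cons_erase ((mem_erase_of_ne hba).2 hbS), cons_erase (mem_toFinset.1 haS)]
  refine ⟨a, b, Ne.symm hba, hS', fun c => ?_⟩
  show count c S' ≤ m
  have hc := hcount c
  rw [← hS', count_cons, count_cons] at hc
  by_cases hca : c = a
  · subst hca; simp at hc; omega
  by_cases hcb : c = b
  · subst hcb; simp [hba] at hc; omega
  simp only [hca, hcb, if_false, add_zero] at hc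
  by_contra! hlt
  have hcS : c ∈ S :=
    mem_of_le ((erase_le _ _).trans (erase_le _ _)) (count_pos.1 ((Nat.zero_le m).trans_lt hlt))
  have := count_add_count_add_count_le_card (Ne.symm hba) (Ne.symm hca) (Ne.symm hcb) S
  have := hamax c (mem_toFinset.2 hcS)
  have := hbmax c (mem_toFinset.2 (mem_filter.2 ⟨hcS, hca⟩))
  have : count c S = count c S' := by rw [← hS']; simp [hca, hcb]
  omega

theorem exists_pairing [DecidableEq α] {m : ℕ} {S : Multiset α} (hS : card S = 2 * m)
    (hcount : ∀ a, count a S ≤ m) :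
    ∃ P : Multiset (α × α), (∀ x ∈ P, x.1 ≠ x.2) ∧ P.map Prod.fst + P.map Prod.snd = S := by
  induction m generalizing S with
  | zero => exact ⟨0, by simp, by simpa [eq_comm] using hS⟩
  | succ m ih =>
    obtain ⟨a, b, hab, hS', hcount'⟩ := exists_erase_erase_count_le hS hcount
    obtain ⟨P, hP, hPS⟩ := ih (by
      have := congrArg card hS'; simp only [card_cons] at this; omega) hcount'
    refine ⟨(a, b) ::ₘ P, fun x hx => ?_, ?_⟩
    · rcases mem_cons.1 hx with rfl | hx
      exacts [hab, hP x hx]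
    · rw [map_cons, map_cons, cons_add, add_cons, hPS, hS']

theorem map_fst_add_map_snd_map {f : α × α → α × α} (hf : ∀ x, f x = x ∨ f x = x.swap)
    (P : Multiset (α × α)) :
    (P.map f).map Prod.fst + (P.map f).map Prod.snd = P.map Prod.fst + P.map Prod.snd := by
  induction P using Multiset.induction with
  | empty => rfl
  | cons x P ih =>
    simp only [map_cons, cons_add, add_cons, ih]
    rcases hf x with h | h <;> rw [h]
    exact cons_swap _ _ _

end Multiset

theorem Finset.mem_of_natCard_le_card {α : Type*} [Finite α] {s : Finset α}
    (hs : Nat.card α ≤ s.card) (x : α) : x ∈ s := by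
  have := Fintype.ofFinite α
  by_contra hx
  have := Finset.card_lt_univ_of_notMem hx
  rw [← Nat.card_eq_fintype_card] at this
  omega

section

variable {G : Type*} [AddCommGroup G]

/-- `Σₙ(S)`. -/
def sumsOfCard (n : ℕ) (S : Multiset G) : Set G :=
  {x | ∃ T ≤ S, card T = n ∧ T.sum = x}

def InverseEGZ (n : ℕ) (G : Type*) [AddCommGroup G] : Prop :=
  ∀ S : Multiset G, card S = 2 * n - 2 → 0 ∉ sumsOfCard n S →
    ∃ g h : G, S = replicate (n - 1) g + replicate (n - 1) h

section ZeroSums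

variable {n : ℕ} {S : Multiset G}

theorem zero_mem_sumsOfCard_of_replicate_le {g : G} (hg : n • g = 0) (h : replicate n g ≤ S) :
    0 ∈ sumsOfCard n S :=
  ⟨replicate n g, h, card_replicate n g, by rw [sum_replicate, hg]⟩

theorem lt_of_replicate_le {c : ℕ} {g : G} (hg : n • g = 0) (h0 : 0 ∉ sumsOfCard n S)
    (h : replicate c g ≤ S) : c < n :=
  not_le.1 fun hle => h0 (zero_mem_sumsOfCard_of_replicate_le hg
    (((replicate_le_replicate g).2 hle).trans h))

theorem zero_mem_sumsOfCard_of_isAddCyclic [IsAddCyclic G] (hG : Nat.card G = n)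
    (hS : 2 * n - 1 ≤ card S) : 0 ∈ sumsOfCard n S := by
  subst hG
  let e := zmodAddCyclicAddEquiv (inferInstance : IsAddCyclic G)
  obtain ⟨T, hT, hcard, hsum⟩ := ZMod.erdos_ginzburg_ziv_multiset (S.map e.symm) (by simpa using hS)
  refine ⟨T.map e, ?_, by rw [card_map, hcard], by rw [← map_multiset_sum, hsum, e.map_zero]⟩
  simpa [map_map] using map_le_map (f := e) hT

theorem addOrderOf_sub_eq (hG : Nat.card G = n) (hn : n ≠ 0) {g h : G}
    (h0 : 0 ∉ sumsOfCard n (replicate (n - 1) g + replicate (n - 1) h)) :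
    addOrderOf (g - h) = n := by
  have hdvd : addOrderOf (g - h) ∣ n := addOrderOf_dvd_of_nsmul_eq_zero (hG ▸ card_nsmul_eq_zero')
  have hpos : 0 < addOrderOf (g - h) := Nat.pos_of_dvd_of_pos hdvd (Nat.pos_of_ne_zero hn)
  refine (Nat.le_of_dvd (Nat.pos_of_ne_zero hn) hdvd).antisymm (not_lt.1 fun hlt => h0 ?_)
  set d := addOrderOf (g - h)
  refine ⟨replicate d g + replicate (n - d) h, add_le_add ((replicate_le_replicate _).2 (by omega))
    ((replicate_le_replicate _).2 (by omega)), by simp; omega, ?_⟩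
  have : d • g + (n - d) • h = d • (g - h) + n • h := by
    rw [nsmul_sub, ← Nat.sub_add_cancel hlt.le, add_nsmul, Nat.sub_add_cancel hlt.le]; abel
  rw [sum_add, sum_replicate, sum_replicate, this, addOrderOf_nsmul_eq_zero, ← hG,
    card_nsmul_eq_zero', add_zero]

end ZeroSums

section PrimeOrder

variable {p : ℕ}

theorem exists_lt_nsmul_eq (hp : p.Prime) (hG : Nat.card G = p) {d : G} (hd : d ≠ 0) (c : G) :
    ∃ j < p, j • d = c := by
  classical
  have : Fact p.Prime := ⟨hp⟩
  have : Finite G := Nat.finite_of_card_ne_zero (hG ▸ hp.ne_zero)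
  have hc : c ∈ AddSubgroup.zmultiples d := by
    rw [zmultiples_eq_top_of_prime_card hG hd]; trivial
  obtain ⟨j, hj, rfl⟩ := Finset.mem_image.1 (mem_zmultiples_iff_mem_range_addOrderOf.1 hc)
  rw [Finset.mem_range, addOrderOf_eq_prime (hG ▸ card_nsmul_eq_zero') hd] at hj
  exact ⟨j, hj, rfl⟩

theorem eq_or_eq_neg_of_card_lt_five (hp : p.Prime) (hG : Nat.card G = p) (hp5 : p < 5) {a b : G}
    (ha : a ≠ 0) (hb : b ≠ 0) : b = a ∨ b = -a := by
  obtain ⟨j, hj, rfl⟩ := exists_lt_nsmul_eq hp hG ha b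
  have hp4 : p ≠ 4 := by rintro rfl; norm_num at hp
  rcases (by omega : j = 0 ∨ j = 1 ∨ j = 2) with rfl | rfl | rfl
  · simp at hb
  · simp
  · right
    rw [eq_neg_iff_add_eq_zero, ← succ_nsmul, show 2 + 1 = p by omega, ← hG, card_nsmul_eq_zero']

section ChoiceSums

variable [DecidableEq G]

theorem min_le_card_add_of_card_eq_prime (hp : p.Prime) (hG : Nat.card G = p) {s t : Finset G}
    (hs : s.Nonempty) (ht : t.Nonempty) : min p (s.card + t.card - 1) ≤ (s + t).card := by
  have : Fact p.Prime := ⟨hp⟩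
  have hmin : (p : ℕ∞) ≤ AddMonoid.minOrder G := AddMonoid.le_minOrder.2 fun a ha _ => by
    rw [addOrderOf_eq_prime (hG ▸ card_nsmul_eq_zero') ha]
  simpa only [min_le_iff, Nat.cast_le] using
    (min_le_min_right _ hmin).trans (cauchy_davenport_minOrder_add hs ht)

theorem card_pair_add_pair {a b c e : G} (hab : a ≠ b) (hce : c ≠ e) (h₁ : e - c ≠ b - a)
    (h₂ : e - c ≠ -(b - a)) : 4 ≤ (({a, b} : Finset G) + {c, e}).card := by
  have hsub : ({a + c, a + e, b + c, b + e} : Finset G) ⊆ {a, b} + {c, e} := by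
    intro x hx
    simp only [Finset.mem_insert, Finset.mem_singleton] at hx
    rcases hx with rfl | rfl | rfl | rfl <;> exact Finset.add_mem_add (by simp) (by simp)
  refine le_of_eq_of_le ?_ (Finset.card_le_card hsub)
  have d₁ : a + c ≠ b + e := fun h => h₂ (by rw [neg_sub, sub_eq_sub_iff_add_eq_add, h, add_comm])
  have d₂ : a + e ≠ b + c := fun h => h₁ (by rw [sub_eq_sub_iff_add_eq_add, add_comm, h, add_comm])
  rw [Finset.card_insert_of_notMem, Finset.card_insert_of_notMem, Finset.card_pair] <;>
    simp [hab, hce, d₁, d₂]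

def choiceSums (P : Multiset (G × G)) : Finset G :=
  (P.map fun x => ({x.1, x.2} : Finset G)).sum

theorem choiceSums_cons (x : G × G) (P : Multiset (G × G)) :
    choiceSums (x ::ₘ P) = {x.1, x.2} + choiceSums P := by
  simp [choiceSums]

theorem choiceSums_subset_sumsOfCard (P : Multiset (G × G)) :
    ↑(choiceSums P) ⊆ sumsOfCard (card P) (P.map Prod.fst + P.map Prod.snd) := by
  induction P using Multiset.induction with
  | empty => simp [choiceSums, sumsOfCard]
  | cons x P ih =>
    intro w hw
    obtain ⟨e, he, w', hw', rfl⟩ := Finset.mem_add.1 (choiceSums_cons x P ▸ hw)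
    obtain ⟨T, hT, hcard, rfl⟩ := ih hw'
    refine ⟨e ::ₘ T, ?_, by simp [hcard], by simp⟩
    rw [map_cons, map_cons, cons_add, add_cons]
    rcases Finset.mem_insert.1 he with rfl | he
    · exact cons_le_cons _ (hT.trans (le_cons_self _ x.2))
    · rw [Finset.mem_singleton.1 he, cons_swap]
      exact cons_le_cons _ (hT.trans (le_cons_self _ x.1))

theorem card_choiceSums (hp : p.Prime) (hG : Nat.card G = p) {P : Multiset (G × G)}
    (hP : ∀ x ∈ P, x.1 ≠ x.2) : min p (card P + 1) ≤ (choiceSums P).card := by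
  induction P using Multiset.induction with
  | empty => simp [choiceSums]
  | cons x P ih =>
    have ih := ih fun y hy => hP y (mem_cons_of_mem hy)
    have hne : (choiceSums P).Nonempty := Finset.card_pos.1 (by have := hp.two_le; omega)
    have := min_le_card_add_of_card_eq_prime hp hG (Finset.insert_nonempty x.1 {x.2}) hne
    rw [Finset.card_pair (hP x (mem_cons_self x P))] at this
    rw [choiceSums_cons, card_cons]
    omega

theorem nsmul_add_mem_choiceSums {d : G} {M : Multiset (G × G)} (hM : ∀ x ∈ M, x.2 = x.1 + d)
    {j : ℕ} (hj : j ≤ card M) : (M.map Prod.fst).sum + j • d ∈ choiceSums M := by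
  induction M using Multiset.induction generalizing j with
  | empty => simp_all [choiceSums]
  | cons x M ih =>
    have ih := @ih fun y hy => hM y (mem_cons_of_mem hy)
    rw [choiceSums_cons, Finset.mem_add]
    cases j with
    | zero => exact ⟨x.1, by simp, _, ih (Nat.zero_le _), by simp⟩
    | succ j =>
      refine ⟨x.2, by simp, _, ih (by simpa using hj), ?_⟩
      rw [hM x (mem_cons_self x M), map_cons, sum_cons, succ_nsmul]
      abel

theorem neg_add_notMem_choiceSums {S : Multiset G} {x : G × G} {M : Multiset (G × G)}
    (hS : (x ::ₘ M).map Prod.fst + (x ::ₘ M).map Prod.snd = S)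
    (h0 : 0 ∉ sumsOfCard (card M + 2) S) : -(x.1 + x.2) ∉ choiceSums M := by
  intro hw
  obtain ⟨T, hT, hcard, hsum⟩ := choiceSums_subset_sumsOfCard M hw
  refine h0 ⟨x.1 ::ₘ x.2 ::ₘ T, ?_, by simp [hcard], by simp [hsum]⟩
  rw [← hS, map_cons, map_cons, cons_add, add_cons]
  exact cons_le_cons _ (cons_le_cons _ hT)

end ChoiceSums

/-- Otherwise `{x.1, x.2} + {y.1, y.2}` has four elements, and by Cauchy–Davenport the choice sums
of all pairs but `r` would exhaust `G`, including the element completing `r` to a zero sum. -/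
theorem sub_eq_or_sub_eq_neg_of_pairing (hp : p.Prime) (hG : Nat.card G = p) {S : Multiset G}
    {r x y : G × G} {M : Multiset (G × G)} (hP : ∀ z ∈ r ::ₘ x ::ₘ y ::ₘ M, z.1 ≠ z.2)
    (hS : (r ::ₘ x ::ₘ y ::ₘ M).map Prod.fst + (r ::ₘ x ::ₘ y ::ₘ M).map Prod.snd = S)
    (hcard : card M + 4 = p) (h0 : 0 ∉ sumsOfCard p S) :
    y.2 - y.1 = x.2 - x.1 ∨ y.2 - y.1 = -(x.2 - x.1) := by
  classical
  by_contra! h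
  have : Finite G := Nat.finite_of_card_ne_zero (hG ▸ hp.ne_zero)
  have := hp.two_le
  have hM := card_choiceSums hp hG (P := M) fun z hz => hP z (by simp [hz])
  have h4 := card_pair_add_pair (hP x (by simp)) (hP y (by simp)) h.1 h.2
  have hCD := min_le_card_add_of_card_eq_prime hp hG (s := {x.1, x.2} + {y.1, y.2})
    (t := choiceSums M) (Finset.card_pos.1 (by omega)) (Finset.card_pos.1 (by omega))
  refine neg_add_notMem_choiceSums hS (by simpa [hcard] using h0)
    (Finset.mem_of_natCard_le_card ?_ _)
  rw [choiceSums_cons, choiceSums_cons, ← add_assoc, hG]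
  omega

theorem sub_eq_or_sub_eq_neg_of_cons_cons (hp : p.Prime) (hG : Nat.card G = p)
    {S : Multiset G} {x y : G × G} {M : Multiset (G × G)} (hP : ∀ z ∈ x ::ₘ y ::ₘ M, z.1 ≠ z.2)
    (hS : (x ::ₘ y ::ₘ M).map Prod.fst + (x ::ₘ y ::ₘ M).map Prod.snd = S)
    (hcard : card M + 3 = p) (h0 : 0 ∉ sumsOfCard p S) :
    y.2 - y.1 = x.2 - x.1 ∨ y.2 - y.1 = -(x.2 - x.1) := by
  classical
  rcases lt_or_ge p 5 with hp5 | hp5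
  · exact eq_or_eq_neg_of_card_lt_five hp hG hp5 (sub_ne_zero.2 (hP x (by simp)).symm)
      (sub_ne_zero.2 (hP y (by simp)).symm)
  obtain ⟨r, hr⟩ := (card_pos_iff_exists_mem (s := M)).1 (by omega)
  rw [← cons_erase hr, cons_swap y r, cons_swap x r] at hP hS
  exact sub_eq_or_sub_eq_neg_of_pairing hp hG hP hS (by rw [card_erase_of_mem hr]; simp; omega) h0

theorem fst_eq_of_forall_snd_eq_fst_add (hp : p.Prime) (hG : Nat.card G = p) {d : G} (hd : d ≠ 0)
    {Q : Multiset (G × G)} (hQ : ∀ x ∈ Q, x.2 = x.1 + d) (hcard : card Q + 1 = p)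
    (h0 : 0 ∉ sumsOfCard p (Q.map Prod.fst + Q.map Prod.snd)) :
    ∀ x ∈ Q, x.1 = -(Q.map Prod.fst).sum := by
  classical
  intro x hx
  obtain ⟨M, rfl⟩ : ∃ M, Q = x ::ₘ M := ⟨_, (cons_erase hx).symm⟩
  rw [card_cons] at hcard
  have hnot := neg_add_notMem_choiceSums rfl (by rwa [show card M + 2 = p by omega])
  obtain ⟨j, hj, hjd⟩ := exists_lt_nsmul_eq hp hG hd (-(x.1 + x.2) - (M.map Prod.fst).sum)
  have hjp : j = p - 1 := by
    by_contra hjp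
    refine hnot ?_
    have := nsmul_add_mem_choiceSums (fun y hy => hQ y (mem_cons_of_mem hy)) (j := j) (by omega)
    rwa [hjd, add_sub_cancel] at this
  have hpd : (p - 1) • d = -d := by
    rw [eq_neg_iff_add_eq_zero, ← succ_nsmul, Nat.sub_add_cancel hp.one_le, ← hG,
      card_nsmul_eq_zero']
  rw [hjp, hpd, hQ x (mem_cons_self x M)] at hjd
  rw [map_cons, sum_cons, eq_neg_iff_add_eq_zero]
  calc x.1 + (x.1 + (M.map Prod.fst).sum)
      = -(-(x.1 + (x.1 + d)) - (M.map Prod.fst).sum) - d := by abel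
    _ = 0 := by rw [← hjd]; abel

theorem exists_pairing_forall_snd_eq_fst_add (hp : p.Prime) (hG : Nat.card G = p)
    {S : Multiset G} (hS : card S = 2 * p - 2) (h0 : 0 ∉ sumsOfCard p S) :
    ∃ (Q : Multiset (G × G)) (d : G), d ≠ 0 ∧ card Q + 1 = p ∧ (∀ x ∈ Q, x.2 = x.1 + d) ∧
      Q.map Prod.fst + Q.map Prod.snd = S := by
  classical
  obtain ⟨P, hP, hPS⟩ := exists_pairing (m := p - 1) (S := S) (by omega) fun a => by
    have := lt_of_replicate_le (hG ▸ card_nsmul_eq_zero') h0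
      (le_count_iff_replicate_le.1 (le_refl (count a S)))
    omega
  have hPcard : card P + 1 = p := by
    have := congrArg card hPS; simp only [card_add, card_map] at this; have := hp.two_le; omega
  obtain ⟨x₀, hx₀⟩ := card_pos_iff_exists_mem.1 (show 0 < card P by have := hp.two_le; omega)
  set d := x₀.2 - x₀.1
  have hdiff : ∀ x ∈ P, x.2 - x.1 = d ∨ x.2 - x.1 = -d := fun x hx => by
    rcases eq_or_ne x x₀ with rfl | hxx₀
    · exact Or.inl rfl
    have hx' : x ∈ P.erase x₀ := (mem_erase_of_ne hxx₀).2 hx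
    have hP' : x₀ ::ₘ x ::ₘ (P.erase x₀).erase x = P := by rw [cons_erase hx', cons_erase hx₀]
    rw [← hP'] at hP hPS hPcard
    exact sub_eq_or_sub_eq_neg_of_cons_cons hp hG hP hPS (by simp at hPcard; omega) h0
  refine ⟨P.map fun x => if x.2 - x.1 = d then x else x.swap, d, sub_ne_zero.2 (hP x₀ hx₀).symm,
    by rwa [card_map], ?_, by rw [map_fst_add_map_snd_map (fun x => by split_ifs <;> simp), hPS]⟩
  simp only [mem_map]
  rintro _ ⟨x, hx, rfl⟩
  split_ifs with h
  · rw [← h, add_sub_cancel]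
  · rw [Prod.snd_swap, Prod.fst_swap, ← sub_eq_iff_eq_add', ← neg_sub,
      (hdiff x hx).resolve_left h, neg_neg]

theorem inverseEGZ_of_prime (hp : p.Prime) (hG : Nat.card G = p) : InverseEGZ p G := by
  intro S hS h0
  obtain ⟨Q, d, hd, hcard, hQ, rfl⟩ := exists_pairing_forall_snd_eq_fst_add hp hG hS h0
  have hfst := fst_eq_of_forall_snd_eq_fst_add hp hG hd hQ hcard h0
  generalize -(Q.map Prod.fst).sum = a at hfst
  have hQrep : Q = replicate (p - 1) (a, a + d) :=
    eq_replicate.2 ⟨by omega, fun x hx => Prod.ext (hfst x hx) (by rw [hQ x hx, hfst x hx])⟩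
  exact ⟨a, a + d, by rw [hQrep, map_replicate, map_replicate]⟩

end PrimeOrder

section DisjointZeroSums

def HasDisjointZeroSums (p k : ℕ) (T : Multiset G) : Prop :=
  ∃ C : Multiset (Multiset G), card C = k ∧ (∀ B ∈ C, card B = p ∧ B.sum = 0) ∧ C.sum ≤ T

def IsTwoValued (p : ℕ) (T : Multiset G) : Prop :=
  ∃ x y, x ≠ y ∧ replicate (p - 1) x + replicate (p - 1) y ≤ T ∧ ∀ t ∈ T, t = x ∨ t = y

variable {p : ℕ}

section

variable [DecidableEq G]

theorem HasDisjointZeroSums.of_tsub {k : ℕ} {T B : Multiset G} (hB : B ≤ T) (hcard : card B = p)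
    (hsum : B.sum = 0) (h : HasDisjointZeroSums p k (T - B)) : HasDisjointZeroSums p (k + 1) T := by
  obtain ⟨C, hC, hCB, hCT⟩ := h
  refine ⟨B ::ₘ C, by rw [card_cons, hC], ?_, ?_⟩
  · intro B' hB'
    rcases mem_cons.1 hB' with rfl | hB'
    exacts [⟨hcard, hsum⟩, hCB B' hB']
  · rw [sum_cons, ← add_tsub_cancel_of_le hB]
    exact add_le_add le_rfl hCT

theorem count_add_one_ne_of_sum_eq_zero {x : G} (hx : p • x = 0) {B : Multiset G}
    (hcard : card B = p) (hsum : B.sum = 0) : count x B + 1 ≠ p := by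
  intro hcount
  have hB := filter_add_not (· = x) B
  rw [filter_eq'] at hB
  obtain ⟨z, hz⟩ := card_eq_one.1 (show card (B.filter fun a => ¬a = x) = 1 by
    have := congrArg card hB
    rw [card_add, card_replicate] at this
    omega)
  have hzx : z ≠ x := by
    have := mem_singleton_self z
    rw [← hz, mem_filter] at this
    exact this.2
  rw [hz] at hB
  rw [← hB, sum_add, sum_replicate, sum_singleton] at hsum
  rw [← hcount, succ_nsmul] at hx
  exact hzx (add_left_cancel (hsum.trans hx.symm))

variable [IsAddCyclic G]

/-- A zero-sum `p`-submultiset of `b x^(p-1) y^(p-1)` contains at most `p - 2` copies of `x` and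
of `y`, so the two values of its complement in `T` are `x` and `y`. -/
theorem eq_or_eq_of_mem_tsub (hG : Nat.card G = p) (hp : 2 ≤ p) {T : Multiset G} {x y b : G}
    (hxy : x ≠ y) (hbx : b ≠ x) (hby : b ≠ y)
    (hT : b ::ₘ (replicate (p - 1) x + replicate (p - 1) y) ≤ T)
    (hsplit : ∀ B ≤ T, card B = p → B.sum = 0 → IsTwoValued p (T - B)) :
    ∀ t ∈ T - b ::ₘ (replicate (p - 1) x + replicate (p - 1) y), t = x ∨ t = y := by
  set L := b ::ₘ (replicate (p - 1) x + replicate (p - 1) y)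
  obtain ⟨B, hBL, hcard, hsum⟩ :=
    zero_mem_sumsOfCard_of_isAddCyclic hG (S := L) (by simp [L]; omega)
  have hmem : ∀ z, count z L = p - 1 → z ∈ T - B := by
    intro z hz
    have h₁ := hz ▸ count_le_of_le z hBL
    have h₂ := count_add_one_ne_of_sum_eq_zero (x := z) (hG ▸ card_nsmul_eq_zero') hcard hsum
    have h₃ := hz ▸ count_le_of_le z hT
    rw [← count_pos, count_sub]
    omega
  have hx := hmem x (by simp [L, count_replicate, hbx.symm, hxy.symm])
  have hy := hmem y (by simp [L, count_replicate, hby.symm, hxy])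
  obtain ⟨x', y', -, -, h⟩ := hsplit B (hBL.trans hT) hcard hsum
  intro t ht
  have ht := h t (mem_of_le (tsub_le_tsub_left hBL T) ht)
  rcases h x hx with rfl | rfl <;> rcases h y hy with rfl | rfl <;> tauto

theorem isTwoValued_of_replicate_le (hG : Nat.card G = p) (hp : 2 ≤ p) {T : Multiset G}
    (hsplit : ∀ B ≤ T, card B = p → B.sum = 0 → IsTwoValued p (T - B)) {w : G}
    (hw : replicate p w ≤ T) : IsTwoValued p T := by
  obtain ⟨x, y, hxy, hL, hxyT⟩ := hsplit _ hw (card_replicate _ _)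
    (by rw [sum_replicate, ← hG, card_nsmul_eq_zero'])
  have hw' : w = x ∨ w = y := by
    by_contra! hw'
    have hwT : w ::ₘ (replicate (p - 1) x + replicate (p - 1) y) ≤ T := by
      rw [← add_tsub_cancel_of_le hw, ← singleton_add]
      exact add_le_add (singleton_le.2 (mem_replicate.2 ⟨by omega, rfl⟩)) hL
    have := eq_or_eq_of_mem_tsub hG hp hxy hw'.1 hw'.2 hwT hsplit w (by
      have := (le_count_iff_replicate_le (n := p)).2 hw
      rw [← count_pos, count_sub]
      simp [count_replicate, hw'.1.symm, hw'.2.symm]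
      omega)
    tauto
  refine ⟨x, y, hxy, hL.trans tsub_le_self, fun t ht => ?_⟩
  rw [← add_tsub_cancel_of_le hw] at ht
  rcases mem_add.1 ht with ht | ht
  · exact eq_of_mem_replicate ht ▸ hw'
  · exact hxyT t ht

theorem exists_replicate_le_of_forall_isTwoValued (hG : Nat.card G = p) (hp : 2 ≤ p)
    {T : Multiset G} (hT : 2 * p - 1 ≤ card T)
    (hsplit : ∀ B ≤ T, card B = p → B.sum = 0 → IsTwoValued p (T - B)) :
    ∃ w, replicate p w ≤ T := by
  by_contra! hT'
  obtain ⟨B, hB, hBc, hBs⟩ := zero_mem_sumsOfCard_of_isAddCyclic hG hT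
  obtain ⟨x, y, hxy, hL, -⟩ := hsplit B hB hBc hBs
  have hnotMem : ∀ z, replicate (p - 1) z ≤ T - B → z ∉ B := fun z hz hzB => by
    have h₁ := count_add z B (T - B)
    rw [add_tsub_cancel_of_le hB] at h₁
    have := count_pos.2 hzB
    have := le_count_iff_replicate_le.2 hz
    exact hT' z (le_count_iff_replicate_le.1 (by omega))
  have hBxy : ∀ c ∈ B, c ≠ x ∧ c ≠ y := fun c hc =>
    ⟨fun h => hnotMem x ((le_add_right _ _).trans hL) (h ▸ hc),
      fun h => hnotMem y ((le_add_left _ _).trans hL) (h ▸ hc)⟩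
  obtain ⟨b, hb⟩ := card_pos_iff_exists_mem.1 (show 0 < card B by omega)
  obtain ⟨c, hc⟩ := card_pos_iff_exists_mem.1 (show 0 < card (B.erase b) by
    rw [card_erase_of_mem hb, Nat.pred_eq_sub_one]; omega)
  have hBL : B + (replicate (p - 1) x + replicate (p - 1) y) ≤ T := by
    rw [← add_tsub_cancel_of_le hB]; exact add_le_add le_rfl hL
  have hbT : b ::ₘ (replicate (p - 1) x + replicate (p - 1) y) ≤ T := by
    rw [← singleton_add]; exact (add_le_add (singleton_le.2 hb) le_rfl).trans hBL
  have := eq_or_eq_of_mem_tsub hG hp hxy (hBxy b hb).1 (hBxy b hb).2 hbT hsplit c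
    (mem_of_le (le_tsub_of_add_le_right (by rwa [add_cons, ← cons_add, cons_erase hb])) hc)
  have := hBxy c (mem_of_mem_erase hc)
  tauto

end

theorem isTwoValued_of_not_hasDisjointZeroSums [IsAddCyclic G] (hG : Nat.card G = p)
    (hp : 2 ≤ p) (hIT : InverseEGZ p G) {k : ℕ} {T : Multiset G} (hT : card T = p * (k + 2) - 2)
    (hno : ¬HasDisjointZeroSums p (k + 1) T) : IsTwoValued p T := by
  classical
  induction k generalizing T with
  | zero =>
    have h0 : 0 ∉ sumsOfCard p T := fun ⟨B, hB, hc, hs⟩ =>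
      hno ⟨{B}, rfl, by simpa using ⟨hc, hs⟩, by simpa using hB⟩
    obtain ⟨x, y, rfl⟩ := hIT T (by omega) h0
    refine ⟨x, y, ?_, le_rfl, fun t ht =>
      (mem_add.1 ht).imp eq_of_mem_replicate eq_of_mem_replicate⟩
    rintro rfl
    have := lt_of_replicate_le (hG ▸ card_nsmul_eq_zero') h0 (le_of_eq (replicate_add _ _ x))
    omega
  | succ k ih =>
    have e : p * (k + 1 + 2) = p * (k + 2) + p := by ring
    have hsplit : ∀ B ≤ T, card B = p → B.sum = 0 → IsTwoValued p (T - B) :=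
      fun B hB hc hs => ih (by rw [card_sub hB, hT, hc, e]; omega)
        fun h => hno (h.of_tsub hB hc hs)
    obtain ⟨w, hw⟩ := exists_replicate_le_of_forall_isTwoValued hG hp (by
      rw [hT, e]; have := Nat.mul_le_mul_left p (by omega : 2 ≤ k + 2); omega) hsplit
    exact isTwoValued_of_replicate_le hG hp hsplit hw

end DisjointZeroSums

theorem eq_of_notMem_sumsOfCard_cons {q : ℕ} (hG : Nat.card G = q) (hq : 2 ≤ q)
    (hIT : InverseEGZ q G) {r : Multiset G} (hr : card r = 2 * q - 3) {e₁ e₂ : G}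
    (h₁ : 0 ∉ sumsOfCard q (e₁ ::ₘ r)) (h₂ : 0 ∉ sumsOfCard q (e₂ ::ₘ r)) : e₁ = e₂ := by
  classical
  rcases hq.eq_or_lt with rfl | hq
  · obtain ⟨r₀, rfl⟩ := card_eq_one.1 hr
    have hne : ∀ e, 0 ∉ sumsOfCard 2 (e ::ₘ {r₀}) → e ≠ -r₀ := fun e h he =>
      h ⟨e ::ₘ {r₀}, le_rfl, rfl, by simp [he]⟩
    exact ((Nat.card_eq_two_iff' (-r₀)).1 hG).unique (hne e₁ h₁) (hne e₂ h₂)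
  by_contra hne
  obtain ⟨a, b, hab⟩ := hIT _ (by rw [card_cons]; omega) h₁
  obtain ⟨a', b', hab'⟩ := hIT _ (by rw [card_cons]; omega) h₂
  have c₁ := congrArg (count e₂) hab
  have c₂ := congrArg (count e₂) hab'
  simp only [count_cons, count_add, count_replicate, Ne.symm hne, if_true, if_false] at c₁ c₂
  split_ifs at c₁ c₂ <;> omega

section Extension

variable {K : AddSubgroup G} {p q : ℕ}

theorem exists_blocks [IsAddCyclic (G ⧸ K)] (hH : Nat.card (G ⧸ K) = p) {k : ℕ}
    {T : Multiset G} (hT : p * k + p - 1 ≤ card T) : ∃ C : Multiset (Multiset G),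
      card C = k ∧ (∀ B ∈ C, card B = p ∧ B.sum ∈ K) ∧ C.sum ≤ T := by
  classical
  induction k generalizing T with
  | zero => exact ⟨0, rfl, by simp, by simp⟩
  | succ k ih =>
    rw [mul_add] at hT
    obtain ⟨B₀, hB₀, hcard, hsum⟩ := zero_mem_sumsOfCard_of_isAddCyclic hH
      (S := T.map (QuotientAddGroup.mk' K)) (by rw [card_map]; omega)
    obtain ⟨B, hB, rfl⟩ := exists_le_map_eq hB₀
    rw [card_map] at hcard
    obtain ⟨C, hC, hCB, hCT⟩ := ih (T := T - B) (by rw [card_sub hB, hcard]; omega)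
    refine ⟨B ::ₘ C, by rw [card_cons, hC], ?_, ?_⟩
    · intro B' hB'
      rcases mem_cons.1 hB' with rfl | hB'
      · exact ⟨hcard, (QuotientAddGroup.eq_zero_iff _).1 (by rwa [← map_multiset_sum] at hsum)⟩
      · exact hCB B' hB'
    · rw [sum_cons, ← add_tsub_cancel_of_le hB]
      exact add_le_add le_rfl hCT

theorem notMem_sumsOfCard_of_blocks {S : Multiset G} (h0 : 0 ∉ sumsOfCard (p * q) S)
    {C : Multiset (Multiset G)} (hC : ∀ B ∈ C, card B = p) (hCS : C.sum ≤ S) {E : Multiset K}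
    (hE : E.map (↑) = C.map Multiset.sum) : 0 ∉ sumsOfCard q E := by
  classical
  rintro ⟨E₀, hE₀, hcard, hsum⟩
  obtain ⟨D, hD, hDE⟩ := exists_le_map_eq (hE ▸ map_le_map (f := ((↑) : K → G)) hE₀)
  refine h0 ⟨D.sum, (sum_le_sum_of_le hD).trans hCS, ?_, ?_⟩
  · rw [card_sum_of_forall_card_eq fun B hB => hC B (mem_of_le hD hB), mul_comm,
      ← card_map Multiset.sum, hDE, card_map, hcard]
  · rw [show D.sum.sum = (D.map Multiset.sum).sum from sum_join, hDE, ← AddSubgroup.coe_subtype,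
      ← map_multiset_sum, hsum, _root_.map_zero]

theorem not_hasDisjointZeroSums_map [IsAddCyclic K] (hK : Nat.card K = q) {S : Multiset G}
    (h0 : 0 ∉ sumsOfCard (p * q) S) :
    ¬HasDisjointZeroSums p (2 * q - 1) (S.map (QuotientAddGroup.mk' K)) := by
  classical
  rintro ⟨C, hC, hCB, hCS⟩
  obtain ⟨C', rfl, hC'S⟩ := exists_map_map_eq_of_sum_le hCS
  have hsumK : ∀ s ∈ C'.map Multiset.sum, s ∈ K := by
    simp only [mem_map]
    rintro _ ⟨B, hB, rfl⟩
    rw [← QuotientAddGroup.eq_zero_iff, ← QuotientAddGroup.mk'_apply, map_multiset_sum]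
    exact (hCB _ (mem_map_of_mem _ hB)).2
  lift C'.map Multiset.sum to Multiset K using hsumK with E hE
  refine notMem_sumsOfCard_of_blocks h0 (fun B hB => by simpa using (hCB _ (mem_map_of_mem _ hB)).1)
    hC'S hE (zero_mem_sumsOfCard_of_isAddCyclic hK ?_)
  have := congrArg card hE
  simp only [card_map] at this hC
  omega

/-- Completing `u + R` and `v + R` by the same `2q - 3` blocks gives two extremal sequences in `K`
that differ in one entry. -/
theorem eq_of_cons_cons_le [IsAddCyclic (G ⧸ K)] (hK : Nat.card K = q)
    (hH : Nat.card (G ⧸ K) = p) (hp : 2 ≤ p) (hq : 2 ≤ q) (hIT : InverseEGZ q K)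
    {S : Multiset G} (hS : card S = 2 * (p * q) - 2) (h0 : 0 ∉ sumsOfCard (p * q) S) {u v : G}
    {R : Multiset G} (hle : u ::ₘ v ::ₘ R ≤ S) (hR : card R = p - 1) (hu : u + R.sum ∈ K)
    (hv : v + R.sum ∈ K) : u = v := by
  classical
  have e : p * (2 * q - 3) + 3 * p = 2 * (p * q) := by
    rw [mul_comm 3 p, ← mul_add, Nat.sub_add_cancel (by omega)]; ring
  obtain ⟨F, hF, hFB, hFS⟩ := exists_blocks hH (k := 2 * q - 3) (T := S - u ::ₘ v ::ₘ R)
    (by rw [card_sub hle, card_cons, card_cons]; omega)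
  have hFK : ∀ s ∈ F.map Multiset.sum, s ∈ K := by
    simp only [mem_map]
    rintro _ ⟨B, hB, rfl⟩
    exact (hFB B hB).2
  lift F.map Multiset.sum to Multiset K using hFK with E hE
  have key : ∀ w, w ::ₘ R ≤ u ::ₘ v ::ₘ R → (hw : w + R.sum ∈ K) →
      0 ∉ sumsOfCard q ((⟨w + R.sum, hw⟩ : K) ::ₘ E) := by
    intro w hw hwK
    refine notMem_sumsOfCard_of_blocks (C := (w ::ₘ R) ::ₘ F) h0 ?_ ?_ (by simp [hE])
    · intro B hB
      rcases mem_cons.1 hB with rfl | hB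
      exacts [by rw [card_cons, hR]; omega, (hFB B hB).1]
    · rw [sum_cons, ← add_tsub_cancel_of_le hle]
      exact add_le_add hw hFS
  have hEcard : card E = 2 * q - 3 := by rw [← card_map, hE, card_map, hF]
  have := eq_of_notMem_sumsOfCard_cons hK hq hIT hEcard
    (key u (cons_le_cons _ (le_cons_self _ _)) hu)
    (key v (by rw [cons_swap]; exact cons_le_cons _ (le_cons_self _ _)) hv)
  simpa using congrArg Subtype.val this

theorem exists_eq_replicate_of_forall_mk_eq [IsAddCyclic (G ⧸ K)] (hK : Nat.card K = q)
    (hH : Nat.card (G ⧸ K) = p) (hp : 2 ≤ p) (hq : 2 ≤ q) (hIT : InverseEGZ q K)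
    {S : Multiset G} (hS : card S = 2 * (p * q) - 2) (h0 : 0 ∉ sumsOfCard (p * q) S)
    {Z : Multiset G} (hZS : Z ≤ S) {z : G ⧸ K} (hZ : ∀ s ∈ Z, QuotientAddGroup.mk' K s = z)
    (hZcard : p + 1 ≤ card Z) : ∃ g, Z = replicate (card Z) g := by
  classical
  obtain ⟨g, hg⟩ := card_pos_iff_exists_mem.1 (show 0 < card Z by omega)
  refine ⟨g, eq_replicate.2 ⟨rfl, fun v hv => ?_⟩⟩
  by_contra hvg
  have hv' : v ∈ Z.erase g := (mem_erase_of_ne hvg).2 hv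
  obtain ⟨R, hR, hRcard⟩ := exists_le_card_eq_s7 (S := (Z.erase g).erase v) (k := p - 1)
    (by rw [card_erase_of_mem hv', card_erase_of_mem hg]; simp; omega)
  have hRZ : R ≤ Z := hR.trans ((erase_le _ _).trans (erase_le _ _))
  have hmemK : ∀ w ∈ Z, w + R.sum ∈ K := fun w hw => by
    rw [← QuotientAddGroup.eq_zero_iff, ← QuotientAddGroup.mk'_apply, _root_.map_add,
      map_multiset_sum,
      show R.map (QuotientAddGroup.mk' K) = replicate (p - 1) z from eq_replicate.2
        ⟨by rw [card_map, hRcard], by simpa using fun s hs => hZ s (mem_of_le hRZ hs)⟩,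
      sum_replicate, hZ w hw, ← succ_nsmul', Nat.sub_add_cancel (by omega), ← hH,
      card_nsmul_eq_zero']
  have hle : g ::ₘ v ::ₘ R ≤ S := by
    refine le_trans ?_ hZS
    calc g ::ₘ v ::ₘ R ≤ g ::ₘ v ::ₘ (Z.erase g).erase v := cons_le_cons _ (cons_le_cons _ hR)
      _ = Z := by rw [cons_erase hv', cons_erase hg]
  exact hvg (eq_of_cons_cons_le hK hH hp hq hIT hS h0 hle hRcard (hmemK g hg) (hmemK v hv)).symm

theorem inverseEGZ_of_addSubgroup (K : AddSubgroup G) [IsAddCyclic K] [IsAddCyclic (G ⧸ K)]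
    (hK : Nat.card K = q) (hH : Nat.card (G ⧸ K) = p) (hp : 2 ≤ p) (hq : 2 ≤ q)
    (hITK : InverseEGZ q K) (hITH : InverseEGZ p (G ⧸ K)) : InverseEGZ (p * q) G := by
  classical
  intro S hS h0
  have hG : Nat.card G = p * q := by
    rw [AddSubgroup.card_eq_card_quotient_mul_card_addSubgroup K, hH, hK]
  have h2p : 2 * p ≤ p * q := by nlinarith
  obtain ⟨x, y, -, -, hxy⟩ := isTwoValued_of_not_hasDisjointZeroSums hH hp hITH
    (T := S.map (QuotientAddGroup.mk' K)) (k := 2 * q - 2)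
    (by rw [card_map, hS, show 2 * q - 2 + 2 = 2 * q by omega, mul_left_comm])
    (by rw [show 2 * q - 2 + 1 = 2 * q - 1 by omega]; exact not_hasDisjointZeroSums_map hK h0)
  set X := S.filter fun s => QuotientAddGroup.mk' K s = x
  set Y := S.filter fun s => ¬QuotientAddGroup.mk' K s = x
  have hXY : X + Y = S := filter_add_not _ S
  have hconst : ∀ Z ≤ S, ∀ z, (∀ s ∈ Z, QuotientAddGroup.mk' K s = z) → p + 1 ≤ card Z →
      ∃ g, Z = replicate (card Z) g ∧ card Z < p * q := fun Z hZS z hZ hZcard => by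
    obtain ⟨g, hg⟩ := exists_eq_replicate_of_forall_mk_eq hK hH hp hq hITK hS h0 hZS hZ hZcard
    exact ⟨g, hg, lt_of_replicate_le (hG ▸ card_nsmul_eq_zero') h0 (hg.symm.le.trans hZS)⟩
  have hX := hconst X (hXY ▸ le_add_right _ _) x fun s hs => (mem_filter.1 hs).2
  have hY := hconst Y (hXY ▸ le_add_left _ _) y fun s hs =>
    (hxy _ (mem_map_of_mem _ (mem_filter.1 hs).1)).resolve_left (mem_filter.1 hs).2
  have hcard : card X + card Y = 2 * (p * q) - 2 := by rw [← card_add, hXY, hS]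
  -- a class with at most `p` terms leaves at least `n` equal terms in the other one
  have hXbig : p + 1 ≤ card X := by
    by_contra!
    obtain ⟨-, -, hYc⟩ := hY (by omega)
    omega
  have hYbig : p + 1 ≤ card Y := by
    by_contra!
    obtain ⟨-, -, hXc⟩ := hX (by omega)
    omega
  obtain ⟨g, hg, hXc⟩ := hX hXbig
  obtain ⟨h, hh, hYc⟩ := hY hYbig
  refine ⟨g, h, ?_⟩
  rw [← hXY, hg, hh, show card X = p * q - 1 by omega, show card Y = p * q - 1 by omega]

end Extension

theorem IsAddCyclic.exists_addSubgroup_card_eq [IsAddCyclic G] {p q : ℕ}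
    (hG : Nat.card G = p * q) (hp : 0 < p) (hq : 0 < q) :
    ∃ K : AddSubgroup G, Nat.card K = q ∧ Nat.card (G ⧸ K) = p := by
  have : Finite G := Nat.finite_of_card_ne_zero (by rw [hG]; positivity)
  obtain ⟨g, hg⟩ := IsAddCyclic.exists_generator (α := G)
  have hK : Nat.card (AddSubgroup.zmultiples (p • g)) = q := by
    rw [Nat.card_zmultiples, addOrderOf_nsmul, addOrderOf_eq_card_of_forall_mem_zmultiples hg, hG,
      Nat.gcd_mul_right_left, Nat.mul_div_cancel_left _ hp]
  refine ⟨_, hK, Nat.eq_of_mul_eq_mul_right hq ?_⟩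
  rw [← hK, ← AddSubgroup.card_eq_card_quotient_mul_card_addSubgroup, hK, hG]

theorem inverseEGZ_of_isAddCyclic (n : ℕ) : ∀ (G : Type u) [AddCommGroup G] [IsAddCyclic G],
    Nat.card G = n → 2 ≤ n → InverseEGZ n G := by
  induction n using Nat.strong_induction_on with
  | _ n ih =>
    intro G _ _ hG hn
    by_cases hprime : n.Prime
    · exact inverseEGZ_of_prime hprime hG
    obtain ⟨p, q, hpn, hqn, rfl⟩ := (Nat.not_prime_iff_exists_mul_eq hn).1 hprime
    have hp : 2 ≤ p := by by_contra!; interval_cases p <;> omega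
    have hq : 2 ≤ q := by by_contra!; interval_cases q <;> omega
    obtain ⟨K, hK, hH⟩ := IsAddCyclic.exists_addSubgroup_card_eq hG (by omega) (by omega)
    have := isAddCyclic_of_surjective (QuotientAddGroup.mk' K) (QuotientAddGroup.mk'_surjective K)
    exact inverseEGZ_of_addSubgroup K hK hH hp hq (ih q hqn K hK hq) (ih p hpn (G ⧸ K) hH hp)

end

theorem stmt_7 {G : Type*} [AddCommGroup G] [Fintype G] [IsAddCyclic G]
    (n : ℕ) (hn : 2 ≤ n) (hG : Fintype.card G = n)
    (S : Multiset G) (hS : Multiset.card S = 2 * n - 2)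
    (h0 : ¬ ∃ T ≤ S, Multiset.card T = n ∧ T.sum = 0) :
    ∃ g h : G, S = Multiset.replicate (n - 1) g + Multiset.replicate (n - 1) h ∧
      addOrderOf (g - h) = n := by
  rw [← Nat.card_eq_fintype_card] at hG
  obtain ⟨g, h, rfl⟩ := inverseEGZ_of_isAddCyclic n G hG hn S hS h0
  exact ⟨g, h, rfl, addOrderOf_sub_eq hG (by omega) h0⟩
end
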